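/- Let Φ(x) = (1/√(2π)) · ∫_{−∞}^{x} exp(−u²/2) du, let r > 0 and σ > 0, and define P_D(δ) = Φ(h(δ)) with h(δ) = (−log r − log(1 − δ))/σ for δ ∈ [0, 1). Then at every δ ∈ (0, 1) such that −log(r·(1 − δ)) < σ², the second derivative of P_D at δ exists and is strictly positive; explicitly, P_D′′(δ) = φ(h(δ)) · (1/(σ(1−δ)²)) · (1 − h(δ)/σ) > 0, where φ(x) = (1/√(2π))·exp(−x²/2). -/

import Mathlib

/-- The standard normal CDF `Φ(x) = (1/√(2π)) · ∫_{−∞}^{x} exp(−u²/2) du`. -/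
noncomputable def stdNormalCDF (x : ℝ) : ℝ :=
  (Real.sqrt (2 * Real.pi))⁻¹ * ∫ u in Set.Iio x, Real.exp (-(u ^ 2 / 2))

/-- The standard normal PDF `φ(x) = (1/√(2π))·exp(−x²/2)`. -/
noncomputable def stdNormalPDF (x : ℝ) : ℝ :=
  (Real.sqrt (2 * Real.pi))⁻¹ * Real.exp (-(x ^ 2 / 2))

noncomputable def auxH (r σ δ : ℝ) : ℝ := (-Real.log r - Real.log (1 - δ)) / σ

lemma gauss_integrable : MeasureTheory.Integrable (fun u : ℝ => Real.exp (-(u ^ 2 / 2))) := by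
  have := integrable_exp_neg_mul_sq (b := (1/2 : ℝ)) (by norm_num)
  convert this using 2 with u
  ring_nf

lemma gauss_continuous : Continuous (fun u : ℝ => Real.exp (-(u ^ 2 / 2))) := by
  continuity

lemma cdf_hasDerivAt (x : ℝ) : HasDerivAt stdNormalCDF (stdNormalPDF x) x := by
  have key : ∀ y : ℝ, stdNormalCDF y =
      (Real.sqrt (2 * Real.pi))⁻¹ * ((∫ u in Set.Iic (0:ℝ), Real.exp (-(u ^ 2 / 2)))
        + ∫ u in (0:ℝ)..y, Real.exp (-(u ^ 2 / 2))) := by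
    intro y
    rw [stdNormalCDF, ← MeasureTheory.integral_Iic_eq_integral_Iio]
    congr 1
    rw [← intervalIntegral.integral_Iic_sub_Iic
      gauss_integrable.integrableOn gauss_integrable.integrableOn]
    ring
  have hd : HasDerivAt (fun y => ∫ u in (0:ℝ)..y, Real.exp (-(u ^ 2 / 2)))
      (Real.exp (-(x ^ 2 / 2))) x :=
    intervalIntegral.integral_hasDerivAt_right gauss_integrable.intervalIntegrable
      gauss_continuous.aestronglyMeasurable.stronglyMeasurableAtFilter
      gauss_continuous.continuousAt
  have h2 := ((hd.const_add (∫ u in Set.Iic (0:ℝ), Real.exp (-(u ^ 2 / 2)))).const_mul ((Real.sqrt (2 * Real.pi))⁻¹))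
  rw [show stdNormalCDF = fun y => (Real.sqrt (2 * Real.pi))⁻¹ *
      ((∫ u in Set.Iic (0:ℝ), Real.exp (-(u ^ 2 / 2)))
        + ∫ u in (0:ℝ)..y, Real.exp (-(u ^ 2 / 2))) from funext key, stdNormalPDF]
  exact h2


/-- Proposition 5(i) (convexity of default probability near the threshold): with
`P_D(δ) = Φ(h(δ))`, `h(δ) = (−log r − log(1 − δ))/σ`, at every `δ ∈ (0,1)` with
`−log(r·(1 − δ)) < σ²` the second derivative of `P_D` exists and equals
`φ(h(δ)) · (1/(σ(1−δ)²)) · (1 − h(δ)/σ) > 0`. -/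
theorem default_prob_convex (r σ : ℝ) (hr : 0 < r) (hσ : 0 < σ) :
    ∀ δ ∈ Set.Ioo (0 : ℝ) 1, -Real.log (r * (1 - δ)) < σ ^ 2 →
      HasDerivAt
        (deriv (fun δ : ℝ => stdNormalCDF ((-Real.log r - Real.log (1 - δ)) / σ)))
        (stdNormalPDF ((-Real.log r - Real.log (1 - δ)) / σ) * (1 / (σ * (1 - δ) ^ 2)) *
          (1 - ((-Real.log r - Real.log (1 - δ)) / σ) / σ)) δ ∧
      0 < stdNormalPDF ((-Real.log r - Real.log (1 - δ)) / σ) * (1 / (σ * (1 - δ) ^ 2)) *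
          (1 - ((-Real.log r - Real.log (1 - δ)) / σ) / σ) := by
  intro δ hδ hthr
  obtain ⟨hδ0, hδ1⟩ := hδ
  have hder : ∀ δ' : ℝ, δ' < 1 → HasDerivAt (auxH r σ) (1 / (σ * (1 - δ'))) δ' := by
    intro δ' hδ'
    have h1 : (0:ℝ) < 1 - δ' := by linarith
    have hlog : HasDerivAt (fun d : ℝ => Real.log (1 - d)) (-(1/(1-δ'))) δ' := by
      have := (Real.hasDerivAt_log h1.ne').comp δ'
        ((hasDerivAt_const δ' (1:ℝ)).sub (hasDerivAt_id δ'))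
      simp at this ⊢; exact this
    have := (((hasDerivAt_const δ' (-Real.log r)).sub hlog).div_const σ)
    refine this.congr_deriv ?_; symm
    field_simp
    ring
  have hfirst : ∀ δ' : ℝ, δ' < 1 →
      HasDerivAt (fun d => stdNormalCDF (auxH r σ d))
        (stdNormalPDF (auxH r σ δ') * (1 / (σ * (1 - δ')))) δ' := by
    intro δ' hδ'
    exact (cdf_hasDerivAt (auxH r σ δ')).comp δ' (hder δ' hδ')
  have hderiv_eq : ∀ δ' ∈ Set.Iio (1:ℝ),
      deriv (fun d => stdNormalCDF (auxH r σ d)) δ'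
        = stdNormalPDF (auxH r σ δ') * (1 / (σ * (1 - δ'))) := by
    intro δ' hδ'
    exact (hfirst δ' hδ').deriv
  have h1 : (0:ℝ) < 1 - δ := by linarith
  have hg : HasDerivAt (fun d => stdNormalPDF (auxH r σ d) * (1 / (σ * (1 - d))))
      (stdNormalPDF (auxH r σ δ) * (1 / (σ * (1 - δ) ^ 2)) * (1 - auxH r σ δ / σ)) δ := by
    have hpdf : HasDerivAt (fun d => stdNormalPDF (auxH r σ d))
        (stdNormalPDF (auxH r σ δ) * (-(auxH r σ δ)) * (1 / (σ * (1 - δ)))) δ := by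
      have hexp : HasDerivAt (fun x : ℝ => Real.exp (-(x ^ 2 / 2)))
          (Real.exp (-((auxH r σ δ) ^ 2 / 2)) * (-(auxH r σ δ))) (auxH r σ δ) := by
        have hx : HasDerivAt (fun x : ℝ => -(x ^ 2 / 2)) (-(auxH r σ δ)) (auxH r σ δ) := by
          have := ((hasDerivAt_pow 2 (auxH r σ δ)).div_const 2).neg
          refine this.congr_deriv ?_; ring
        exact hx.exp
      have := ((hexp.comp δ (hder δ hδ1)).const_mul ((Real.sqrt (2 * Real.pi))⁻¹))
      simp only [stdNormalPDF]
      refine this.congr_deriv ?_; symm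
      ring
    have hinv : HasDerivAt (fun d : ℝ => 1 / (σ * (1 - d))) (1 / (σ * (1 - δ) ^ 2)) δ := by
      have hne : σ * (1 - δ) ≠ 0 := by positivity
      have hden : HasDerivAt (fun d : ℝ => σ * (1 - d)) (-σ) δ := by
        have := ((hasDerivAt_const δ (1:ℝ)).sub (hasDerivAt_id δ)).const_mul σ
        simpa using this
      have := (hasDerivAt_const δ (1:ℝ)).div hden hne
      refine this.congr_deriv ?_; symm
      field_simp
      ring
    have := hpdf.mul hinv
    refine this.congr_deriv ?_; symm
    have hσne : σ ≠ 0 := hσ.ne'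
    have h1ne : (1:ℝ) - δ ≠ 0 := h1.ne'
    simp only [auxH]
    field_simp
    ring
  constructor
  · refine hg.congr_of_eventuallyEq ?_
    simp only [auxH] at hderiv_eq
    filter_upwards [eventually_lt_nhds hδ1] with d hd
    simp only [auxH]
    exact hderiv_eq d hd
  · have hpos : 0 < stdNormalPDF (auxH r σ δ) := by
      rw [stdNormalPDF]
      positivity
    have hlt : auxH r σ δ < σ := by
      have heq : -Real.log r - Real.log (1 - δ) = -Real.log (r * (1 - δ)) := by
        rw [Real.log_mul hr.ne' h1.ne']; ring
      rw [auxH, heq, div_lt_iff₀ hσ]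
      calc -Real.log (r * (1 - δ)) < σ ^ 2 := hthr
        _ = σ * σ := sq σ
    have hsub : 0 < 1 - auxH r σ δ / σ := by
      rw [sub_pos, div_lt_one hσ]; exact hlt
    have h2 : 0 < 1 / (σ * (1 - δ) ^ 2) := by positivity
    exact mul_pos (mul_pos hpos h2) hsub
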